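/- Under Assumption A, let β ∈ (0, 1/4), r ∈ (β, (1−2β)/2), let θ satisfy 0 ≤ θ < min{β/2, (1/2 − r)/2}, let {σ_n} be a sequence in (0,1) with lim_{n→∞} σ_n = 0, let {c_n} be a sequence in [0, ∞) with Σ_{n=1}^∞ c_n < ∞, and let δ_0, δ_1 > 0. Given arbitrary v̂, w_0, w_1 ∈ H, let {w_n} satisfy, for all n ≥ 1, the resolvent inclusion σ_n v̂ + (1−σ_n)(w_n + θ(w_n − w_{n−1})) − δ_n T w_n − δ_{n−1}(1−σ_n)(T w_n − T w_{n−1}) − w_{n+1} ∈ δ_n • S(w_{n+1}), where the step sizes δ_n obey the adaptive rule: δ_{n+1} = min{ r‖w_n − w_{n+1}‖ / ‖T w_n − T w_{n+1}‖, δ_n + c_n } if T w_n ≠ T w_{n+1}, and δ_{n+1} = δ_n + c_n otherwise. Then the sequence {w_n} is bounded. -/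

import Mathlib

open Filter Topology
open scoped RealInnerProductSpace Pointwise Classical

/-!
Fix `z` with `-T z ∈ S z`. The adaptive steps never drop below `min δ₁ (r / L)` and grow by at
most the summable `cₙ`, so they converge to a positive limit; hence `δₙ / δₙ₊₁ → 1`, and for any
`K > r` eventually `δₙ ‖T wₙ₊₁ - T wₙ‖ ≤ K ‖wₙ₊₁ - wₙ‖`. Take `r < K < (1 - 3θ) / 2` and

  `Γₙ = ‖wₙ₊₁ - z‖² - θ ‖wₙ - z‖² - 2 δₙ ⟪T wₙ₊₁ - T wₙ, wₙ₊₁ - z⟫ + (2θ + K) ‖wₙ₊₁ - wₙ‖²`.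

Monotonicity of `S` between `wₙ₊₂` and `z`, monotonicity of `T` and Young's inequality give
`Γₙ₊₁ ≤ (1 - σₙ₊₁) Γₙ + σₙ₊₁ ‖v̂ - z‖²` as soon as `σₙ` is small, so `Γ` is eventually bounded
above, while `Γₙ ≥ (1 - 2θ - K) ‖wₙ₊₁ - z‖²` with `1 - 2θ - K > 0`.
-/

open Set

section InnerProductSpace

variable {H : Type*} [NormedAddCommGroup H] [InnerProductSpace ℝ H]

lemma two_mul_inner_sub_sub (a b c : H) :
    2 * ⟪a - b, b - c⟫ = ‖a - c‖ ^ 2 - ‖a - b‖ ^ 2 - ‖b - c‖ ^ 2 := by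
  rw [show a - c = (a - b) + (b - c) by abel, norm_add_sq_real]
  ring

lemma norm_add_smul_sub_sub_sq (θ : ℝ) (x x' z : H) :
    ‖x + θ • (x - x') - z‖ ^ 2
      = (1 + θ) * ‖x - z‖ ^ 2 - θ * ‖x' - z‖ ^ 2 + θ * (1 + θ) * ‖x - x'‖ ^ 2 := by
  rw [show x + θ • (x - x') - z = (1 + θ) • (x - z) - θ • (x' - z) by module,
    show x - x' = (x - z) - (x' - z) by abel]
  simp only [norm_sub_sq_real, norm_smul, real_inner_smul_left, real_inner_smul_right,
    mul_pow, Real.norm_eq_abs, sq_abs]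
  ring

lemma one_sub_mul_norm_sq_sub_le_norm_sub_smul_sq {θ : ℝ} (hθ : 0 ≤ θ) (u v : H) :
    (1 - θ) * ‖u‖ ^ 2 - (θ - θ ^ 2) * ‖v‖ ^ 2 ≤ ‖u - θ • v‖ ^ 2 := by
  have hcs : 2 * ⟪u, v⟫ ≤ ‖u‖ ^ 2 + ‖v‖ ^ 2 := by
    nlinarith [real_inner_le_norm u v, sq_nonneg (‖u‖ - ‖v‖)]
  rw [norm_sub_sq_real, real_inner_smul_right, norm_smul, Real.norm_of_nonneg hθ]
  linarith [mul_le_mul_of_nonneg_left hcs hθ]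

lemma inner_sub_smul_nonneg_of_mem_smul {S : H → Set H}
    (hS : ∀ ⦃a b a' b' : H⦄, a' ∈ S a → b' ∈ S b → 0 ≤ ⟪a' - b', a - b⟫)
    {d : ℝ} (hd : 0 ≤ d) {p q u z : H} (hp : p ∈ d • S q) (hu : u ∈ S z) :
    0 ≤ ⟪p - d • u, q - z⟫ := by
  obtain ⟨s, hs, rfl⟩ := hp
  rw [← smul_sub, real_inner_smul_left]
  exact mul_nonneg hd (hS hs hu)

lemma norm_sub_sq_le_of_mem_smul {T : H → H} {S : H → Set H}
    (hT : ∀ a b : H, 0 ≤ ⟪T a - T b, a - b⟫)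
    (hS : ∀ ⦃a b a' b' : H⦄, a' ∈ S a → b' ∈ S b → 0 ≤ ⟪a' - b', a - b⟫)
    {z : H} (hz : -T z ∈ S z) {σ d₀ d₁ : ℝ} (hσ : 0 ≤ σ) (hd₁ : 0 ≤ d₁) {v y x₀ x₁ x₂ : H}
    (h : σ • v + (1 - σ) • y - d₁ • T x₁ - (d₀ * (1 - σ)) • (T x₁ - T x₀) - x₂ ∈ d₁ • S x₂) :
    ‖x₂ - z‖ ^ 2 ≤ σ * ‖v - z‖ ^ 2 + (1 - σ) * (‖y - z‖ ^ 2 - ‖y - x₂‖ ^ 2)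
      + 2 * d₁ * ⟪T x₂ - T x₁, x₂ - z⟫ - 2 * (d₀ * (1 - σ)) * ⟪T x₁ - T x₀, x₂ - z⟫ := by
  have hmono := inner_sub_smul_nonneg_of_mem_smul hS hd₁ h hz
  rw [show σ • v + (1 - σ) • y - d₁ • T x₁ - (d₀ * (1 - σ)) • (T x₁ - T x₀) - x₂ - d₁ • -T z
      = σ • (v - x₂) + (1 - σ) • (y - x₂) - d₁ • (T x₂ - T z) + d₁ • (T x₂ - T x₁)
        - (d₀ * (1 - σ)) • (T x₁ - T x₀) by module] at hmono
  have hv : σ * (2 * ⟪v - x₂, x₂ - z⟫) = σ * (‖v - z‖ ^ 2 - ‖v - x₂‖ ^ 2 - ‖x₂ - z‖ ^ 2) := by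
    rw [two_mul_inner_sub_sub]
  have hy : (1 - σ) * (2 * ⟪y - x₂, x₂ - z⟫)
      = (1 - σ) * (‖y - z‖ ^ 2 - ‖y - x₂‖ ^ 2 - ‖x₂ - z‖ ^ 2) := by
    rw [two_mul_inner_sub_sub]
  have hTz := mul_nonneg hd₁ (hT x₂ z)
  simp only [inner_sub_left, inner_add_left, real_inner_smul_left] at hmono hv hy hTz ⊢
  linarith [mul_nonneg hσ (sq_nonneg ‖v - x₂‖)]

/-- The weight `2θ + K` is what one step produces on `‖x₁ - x₀‖²`: `θ(1 + θ)` from the inertial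
point, `θ - θ²` from Young's inequality and `K` from the reflected term. -/
def lyapunov (T : H → H) (z : H) (θ K d : ℝ) (x₀ x₁ : H) : ℝ :=
  ‖x₁ - z‖ ^ 2 - θ * ‖x₀ - z‖ ^ 2 - 2 * (d * ⟪T x₁ - T x₀, x₁ - z⟫)
    + (2 * θ + K) * ‖x₁ - x₀‖ ^ 2

lemma mul_norm_sub_sq_le_lyapunov {T : H → H} {z x₀ x₁ : H} {θ K d : ℝ} (hθ : 0 ≤ θ)
    (hK : 0 ≤ K) (hd : 0 ≤ d) (hstep : d * ‖T x₁ - T x₀‖ ≤ K * ‖x₁ - x₀‖) :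
    (1 - 2 * θ - K) * ‖x₁ - z‖ ^ 2 ≤ lyapunov T z θ K d x₀ x₁ := by
  have htri : ‖x₀ - z‖ ≤ ‖x₁ - x₀‖ + ‖x₁ - z‖ := by
    rw [norm_sub_rev x₁]; exact norm_sub_le_norm_sub_add_norm_sub x₀ x₁ z
  have hcross : d * ⟪T x₁ - T x₀, x₁ - z⟫ ≤ K * ‖x₁ - x₀‖ * ‖x₁ - z‖ :=
    calc d * ⟪T x₁ - T x₀, x₁ - z⟫ ≤ d * ‖T x₁ - T x₀‖ * ‖x₁ - z‖ := by
          rw [mul_assoc]; exact mul_le_mul_of_nonneg_left (real_inner_le_norm _ _) hd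
      _ ≤ K * ‖x₁ - x₀‖ * ‖x₁ - z‖ := by gcongr
  unfold lyapunov
  linarith [mul_le_mul_of_nonneg_left (pow_le_pow_left₀ (norm_nonneg _) htri 2) hθ,
    mul_nonneg hθ (sq_nonneg (‖x₁ - x₀‖ - ‖x₁ - z‖)),
    mul_nonneg hK (sq_nonneg (‖x₁ - x₀‖ - ‖x₁ - z‖))]

lemma lyapunov_le {T : H → H} {S : H → Set H}
    (hT : ∀ a b : H, 0 ≤ ⟪T a - T b, a - b⟫)
    (hS : ∀ ⦃a b a' b' : H⦄, a' ∈ S a → b' ∈ S b → 0 ≤ ⟪a' - b', a - b⟫)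
    {z : H} (hz : -T z ∈ S z) {θ K σ d₀ d₁ : ℝ} (hθ : 0 ≤ θ) (hK : 0 ≤ K)
    (hσ : σ ∈ Icc (0 : ℝ) 1) (hd₀ : 0 ≤ d₀) (hd₁ : 0 ≤ d₁) {v x₀ x₁ x₂ : H}
    (hstep : d₀ * ‖T x₁ - T x₀‖ ≤ K * ‖x₁ - x₀‖) (hσK : 2 * θ + K ≤ (1 - σ) * (1 - θ - K))
    (h : σ • v + (1 - σ) • (x₁ + θ • (x₁ - x₀)) - d₁ • T x₁ - (d₀ * (1 - σ)) • (T x₁ - T x₀) - x₂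
      ∈ d₁ • S x₂) :
    lyapunov T z θ K d₁ x₁ x₂ ≤ (1 - σ) * lyapunov T z θ K d₀ x₀ x₁ + σ * ‖v - z‖ ^ 2 := by
  obtain ⟨hσ0, hσ1⟩ := hσ
  have hmain := norm_sub_sq_le_of_mem_smul hT hS hz hσ0 hd₁ h
  have hsplit : ⟪T x₁ - T x₀, x₂ - z⟫ = ⟪T x₁ - T x₀, x₁ - z⟫ + ⟪T x₁ - T x₀, x₂ - x₁⟫ := by
    rw [← inner_add_right, sub_add_sub_cancel']
  rw [norm_add_smul_sub_sub_sq, norm_sub_rev _ x₂, sub_add_eq_sub_sub, hsplit] at hmain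
  have hyoung := one_sub_mul_norm_sq_sub_le_norm_sub_smul_sq hθ (x₂ - x₁) (x₁ - x₀)
  have hcross : -(d₀ * ⟪T x₁ - T x₀, x₂ - x₁⟫) ≤ K * ‖x₁ - x₀‖ * ‖x₂ - x₁‖ :=
    calc -(d₀ * ⟪T x₁ - T x₀, x₂ - x₁⟫) ≤ d₀ * ‖T x₁ - T x₀‖ * ‖x₂ - x₁‖ := by
          rw [mul_assoc, ← mul_neg]
          exact mul_le_mul_of_nonneg_left ((neg_le_abs _).trans (abs_real_inner_le_norm _ _)) hd₀
      _ ≤ K * ‖x₁ - x₀‖ * ‖x₂ - x₁‖ := by gcongr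
  have h1σ : 0 ≤ 1 - σ := by linarith
  unfold lyapunov
  linarith [mul_le_mul_of_nonneg_left hyoung h1σ, mul_le_mul_of_nonneg_left hcross h1σ,
    mul_nonneg (mul_nonneg h1σ hK) (sq_nonneg (‖x₁ - x₀‖ - ‖x₂ - x₁‖)),
    mul_le_mul_of_nonneg_right hσK (sq_nonneg ‖x₂ - x₁‖),
    mul_nonneg (mul_nonneg hσ0 hθ) (sq_nonneg ‖x₁ - z‖)]

end InnerProductSpace

section AdaptiveStep

variable {E F : Type*} [SeminormedAddCommGroup E] [NormedAddCommGroup F]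

noncomputable def adaptiveStep (T : E → F) (r c d : ℝ) (a b : E) : ℝ :=
  if T a ≠ T b then min (r * ‖a - b‖ / ‖T a - T b‖) (d + c) else d + c

variable {T : E → F} {r c d : ℝ} {a b : E}

lemma adaptiveStep_le_add : adaptiveStep T r c d a b ≤ d + c := by
  unfold adaptiveStep
  split_ifs
  exacts [min_le_right _ _, le_rfl]

lemma adaptiveStep_mul_norm_sub_le (hr : 0 ≤ r) :
    adaptiveStep T r c d a b * ‖T a - T b‖ ≤ r * ‖a - b‖ := by
  unfold adaptiveStep
  split_ifs with h
  · have hpos : 0 < ‖T a - T b‖ := norm_pos_iff.2 (sub_ne_zero.2 h)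
    calc min (r * ‖a - b‖ / ‖T a - T b‖) (d + c) * ‖T a - T b‖
        ≤ r * ‖a - b‖ / ‖T a - T b‖ * ‖T a - T b‖ := by gcongr; exact min_le_left _ _
      _ = r * ‖a - b‖ := div_mul_cancel₀ _ hpos.ne'
  · rw [not_not.1 h, sub_self, norm_zero, mul_zero]
    positivity

lemma min_le_adaptiveStep {L : ℝ} (hr : 0 ≤ r) (hL : 0 < L) (hc : 0 ≤ c)
    (hab : ‖T a - T b‖ ≤ L * ‖a - b‖) : min d (r / L) ≤ adaptiveStep T r c d a b := by
  unfold adaptiveStep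
  split_ifs with h
  · have hpos : 0 < ‖T a - T b‖ := norm_pos_iff.2 (sub_ne_zero.2 h)
    refine le_min ((min_le_right _ _).trans ?_) ((min_le_left _ _).trans (by linarith))
    rw [div_le_div_iff₀ hL hpos]
    nlinarith
  · exact (min_le_left _ _).trans (by linarith)

end AdaptiveStep

lemma exists_tendsto_of_le_add_of_summable {u c : ℕ → ℝ} (hu : ∀ n, u (n + 1) ≤ u n + c n)
    (hc : ∀ n, 0 ≤ c n) (hcs : Summable c) (hb : BddBelow (range u)) :
    ∃ l, Tendsto u atTop (𝓝 l) := by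
  set g : ℕ → ℝ := fun n => u n - ∑ k ∈ Finset.range n, c k
  have hg : Antitone g := antitone_nat_of_succ_le fun n => by
    simp only [g, Finset.sum_range_succ]
    linarith [hu n]
  have hgb : BddBelow (range g) := by
    obtain ⟨m, hm⟩ := hb
    refine ⟨m - ∑' k, c k, forall_mem_range.2 fun n => ?_⟩
    linarith [hm (mem_range_self n), hcs.sum_le_tsum (Finset.range n) fun k _ => hc k]
  refine ⟨(⨅ n, g n) + ∑' k, c k,
    ((tendsto_atTop_ciInf hg hgb).add hcs.hasSum.tendsto_sum_nat).congr fun n => ?_⟩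
  simp only [g, sub_add_cancel]

lemma eventually_mul_norm_sub_le {H : Type*} [NormedAddCommGroup H] [InnerProductSpace ℝ H]
    {T : H → H} {L r : ℝ} {c δ : ℕ → ℝ} {w : ℕ → H} (hL : 0 < L)
    (hT : ∀ a b : H, ‖T a - T b‖ ≤ L * ‖a - b‖) (hr : 0 < r) (hc : ∀ n, 0 ≤ c n)
    (hcs : Summable fun n => c (n + 1)) (hδ : 0 < δ 1)
    (hrule : ∀ n, 1 ≤ n → δ (n + 1) = adaptiveStep T r (c n) (δ n) (w n) (w (n + 1)))
    {K : ℝ} (hrK : r < K) :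
    ∀ᶠ n in atTop, 0 ≤ δ n ∧ δ n * ‖T (w (n + 1)) - T (w n)‖ ≤ K * ‖w (n + 1) - w n‖ := by
  set m := min (δ 1) (r / L)
  have hm : 0 < m := lt_min hδ (div_pos hr hL)
  have hlow : ∀ n, m ≤ δ (n + 1) := by
    intro n
    induction n with
    | zero => exact min_le_left _ _
    | succ n ih =>
      rw [hrule (n + 1) n.succ_pos]
      exact (le_min ih (min_le_right _ _)).trans (min_le_adaptiveStep hr.le hL (hc _) (hT _ _))
  obtain ⟨l, hl⟩ := exists_tendsto_of_le_add_of_summable (u := fun n => δ (n + 1))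
    (fun n => (hrule (n + 1) n.succ_pos).trans_le adaptiveStep_le_add) (fun n => hc (n + 1)) hcs
    ⟨m, forall_mem_range.2 hlow⟩
  have hl0 : 0 < l := hm.trans_le (ge_of_tendsto' hl hlow)
  have hratio : Tendsto (fun n => δ (n + 1) / δ (n + 2) * r) atTop (𝓝 r) := by
    simpa [div_self hl0.ne'] using (hl.div (hl.comp (tendsto_add_atTop_nat 1)) hl0.ne').mul_const r
  rw [← map_add_atTop_eq_nat 1, eventually_map]
  filter_upwards [hratio.eventually (gt_mem_nhds hrK)] with n hn
  have hδn : 0 < δ (n + 1) := hm.trans_le (hlow n)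
  have hδn' : 0 < δ (n + 2) := hm.trans_le (hlow (n + 1))
  have hrn := adaptiveStep_mul_norm_sub_le (T := T) (c := c (n + 1)) (d := δ (n + 1))
    (a := w (n + 1)) (b := w (n + 2)) hr.le
  rw [← hrule (n + 1) n.succ_pos, norm_sub_rev, norm_sub_rev (w _)] at hrn
  refine ⟨hδn.le, ?_⟩
  calc δ (n + 1) * ‖T (w (n + 1 + 1)) - T (w (n + 1))‖
      = δ (n + 1) / δ (n + 2) * (δ (n + 2) * ‖T (w (n + 2)) - T (w (n + 1))‖) := by
        field_simp
    _ ≤ δ (n + 1) / δ (n + 2) * (r * ‖w (n + 2) - w (n + 1)‖) := by gcongr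
    _ ≤ K * ‖w (n + 1 + 1) - w (n + 1)‖ := by
        rw [← mul_assoc]; exact mul_le_mul_of_nonneg_right hn.le (norm_nonneg _)

lemma exists_eventually_le_of_le_convex_comb {u s : ℕ → ℝ} {M : ℝ}
    (hs : ∀ n, s n ∈ Icc (0 : ℝ) 1) (h : ∀ᶠ n in atTop, u (n + 1) ≤ (1 - s n) * u n + s n * M) :
    ∃ B, ∀ᶠ n in atTop, u n ≤ B := by
  obtain ⟨N, hN⟩ := eventually_atTop.1 h
  refine ⟨max (u N) M, eventually_atTop.2 ⟨N, fun n hn => ?_⟩⟩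
  induction n, hn using Nat.le_induction with
  | base => exact le_max_left _ _
  | succ n hn ih =>
    obtain ⟨hs0, hs1⟩ := hs n
    calc u (n + 1) ≤ (1 - s n) * u n + s n * M := hN n hn
      _ ≤ (1 - s n) * max (u N) M + s n * max (u N) M := by
        gcongr
        exact le_max_right _ _
      _ = max (u N) M := by ring

lemma exists_forall_norm_le_of_eventually_norm_sub_sq_le {E : Type*} [SeminormedAddCommGroup E]
    {w : ℕ → E} {z : E} {B : ℝ} (h : ∀ᶠ n in atTop, ‖w n - z‖ ^ 2 ≤ B) :
    ∃ C, ∀ n, ‖w n‖ ≤ C := by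
  have hw : ∀ᶠ n in atTop, ‖w n‖ ≤ ‖z‖ + 1 + B := h.mono fun n hn => by
    nlinarith [norm_le_insert' (w n) z, sq_nonneg (‖w n - z‖ - 1)]
  obtain ⟨C, hC⟩ := (isBoundedUnder_of_eventually_le hw).bddAbove_range
  exact ⟨C, fun n => hC (mem_range_self n)⟩

theorem stmt7_general {H : Type*} [NormedAddCommGroup H] [InnerProductSpace ℝ H]
    (T : H → H) (L : ℝ) (hL : 0 < L)
    (hTmono : ∀ a b : H, 0 ≤ ⟪T a - T b, a - b⟫)
    (hTlip : ∀ a b : H, ‖T a - T b‖ ≤ L * ‖a - b‖)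
    (S : H → Set H)
    (hSmono : ∀ ⦃a b a' b' : H⦄, a' ∈ S a → b' ∈ S b → 0 ≤ ⟪a' - b', a - b⟫)
    (hZ : {z : H | -T z ∈ S z}.Nonempty)
    (β r : ℝ) (hβ : β ∈ Set.Ioo (0 : ℝ) (1 / 4)) (hrr : r ∈ Set.Ioo β ((1 - 2 * β) / 2))
    (θ : ℝ) (hθ0 : 0 ≤ θ) (hθ : θ < min (β / 2) ((1 / 2 - r) / 2))
    (σ : ℕ → ℝ) (hσ : ∀ n, σ n ∈ Set.Ioo (0 : ℝ) 1) (hσ0 : Tendsto σ atTop (𝓝 0))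
    (c : ℕ → ℝ) (hc : ∀ n, 0 ≤ c n) (hcsum : Summable fun n => c (n + 1))
    (δ : ℕ → ℝ) (hδ1 : 0 < δ 1)
    (vhat : H) (w : ℕ → H)
    (hrule : ∀ n, 1 ≤ n → δ (n + 1) =
      if T (w n) ≠ T (w (n + 1)) then
        min (r * ‖w n - w (n + 1)‖ / ‖T (w n) - T (w (n + 1))‖) (δ n + c n)
      else δ n + c n)
    (hiter : ∀ n, 1 ≤ n →
      σ n • vhat + (1 - σ n) • (w n + θ • (w n - w (n - 1))) - δ n • T (w n)
          - (δ (n - 1) * (1 - σ n)) • (T (w n) - T (w (n - 1))) - w (n + 1)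
        ∈ δ n • S (w (n + 1))) :
    ∃ C : ℝ, ∀ n, ‖w n‖ ≤ C := by
  obtain ⟨z, hz⟩ := hZ
  have hr : 0 < r := hβ.1.trans hrr.1
  have hθr : 4 * θ < 1 - 2 * r := by linarith [hθ.trans_le (min_le_right _ _)]
  obtain ⟨K, hrK, hK⟩ : ∃ K, r < K ∧ K < (1 - 3 * θ) / 2 := exists_between (by linarith)
  have hK0 : 0 ≤ K := (hr.trans hrK).le
  have hstep := eventually_mul_norm_sub_le hL hTlip hr hc hcsum hδ1 hrule hrK
  have hσK : ∀ᶠ n in atTop, 2 * θ + K ≤ (1 - σ n) * (1 - θ - K) := by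
    have hlim : Tendsto (fun n => (1 - σ n) * (1 - θ - K)) atTop (𝓝 (1 - θ - K)) := by
      simpa using ((tendsto_const_nhds (x := (1 : ℝ))).sub hσ0).mul_const (1 - θ - K)
    exact (hlim.eventually (lt_mem_nhds (by linarith))).mono fun _ => le_of_lt
  set Γ := fun n => lyapunov T z θ K (δ n) (w n) (w (n + 1))
  have hdesc : ∀ᶠ n in atTop, Γ (n + 1) ≤ (1 - σ (n + 1)) * Γ n + σ (n + 1) * ‖vhat - z‖ ^ 2 := by
    filter_upwards [hstep, (tendsto_add_atTop_nat 1).eventually hstep,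
      (tendsto_add_atTop_nat 1).eventually hσK] with n h₀ h₁ hσn
    exact lyapunov_le hTmono hSmono hz hθ0 hK0 (Ioo_subset_Icc_self (hσ _)) h₀.1 h₁.1 h₀.2 hσn
      (by simpa using hiter (n + 1) n.succ_pos)
  obtain ⟨B, hB⟩ :=
    exists_eventually_le_of_le_convex_comb (fun n => Ioo_subset_Icc_self (hσ (n + 1))) hdesc
  have hη : 0 < 1 - 2 * θ - K := by linarith
  refine exists_forall_norm_le_of_eventually_norm_sub_sq_le (z := z) (B := B / (1 - 2 * θ - K)) ?_
  rw [← map_add_atTop_eq_nat 1, eventually_map]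
  filter_upwards [hB, hstep] with n hBn hn
  rw [le_div_iff₀' hη]
  exact (mul_norm_sub_sq_le_lyapunov hθ0 hK0 hn.1 hn.2).trans hBn

/-- Boundedness of the inertial forward-reflected-anchored-backward splitting method (Lemma 4.2). -/
theorem stmt7 {H : Type*} [NormedAddCommGroup H] [InnerProductSpace ℝ H] [CompleteSpace H]
    (T : H → H) (L : ℝ) (hL : 0 < L)
    (hTmono : ∀ a b : H, 0 ≤ ⟪T a - T b, a - b⟫)
    (hTlip : ∀ a b : H, ‖T a - T b‖ ≤ L * ‖a - b‖)
    (S : H → Set H)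
    (hSmono : ∀ ⦃a b a' b' : H⦄, a' ∈ S a → b' ∈ S b → 0 ≤ ⟪a' - b', a - b⟫)
    (hSmax : ∀ a a' : H, (∀ b b', b' ∈ S b → 0 ≤ ⟪a' - b', a - b⟫) → a' ∈ S a)
    (hZ : {z : H | -T z ∈ S z}.Nonempty)
    (β r : ℝ) (hβ : β ∈ Set.Ioo (0 : ℝ) (1 / 4)) (hrr : r ∈ Set.Ioo β ((1 - 2 * β) / 2))
    (θ : ℝ) (hθ0 : 0 ≤ θ) (hθ : θ < min (β / 2) ((1 / 2 - r) / 2))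
    (σ : ℕ → ℝ) (hσ : ∀ n, σ n ∈ Set.Ioo (0 : ℝ) 1) (hσ0 : Tendsto σ atTop (𝓝 0))
    (c : ℕ → ℝ) (hc : ∀ n, 0 ≤ c n) (hcsum : Summable fun n => c (n + 1))
    (δ : ℕ → ℝ) (hδ0 : 0 < δ 0) (hδ1 : 0 < δ 1)
    (vhat : H) (w : ℕ → H)
    (hrule : ∀ n, 1 ≤ n → δ (n + 1) =
      if T (w n) ≠ T (w (n + 1)) then
        min (r * ‖w n - w (n + 1)‖ / ‖T (w n) - T (w (n + 1))‖) (δ n + c n)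
      else δ n + c n)
    (hiter : ∀ n, 1 ≤ n →
      σ n • vhat + (1 - σ n) • (w n + θ • (w n - w (n - 1))) - δ n • T (w n)
          - (δ (n - 1) * (1 - σ n)) • (T (w n) - T (w (n - 1))) - w (n + 1)
        ∈ δ n • S (w (n + 1))) :
    ∃ C : ℝ, ∀ n, ‖w n‖ ≤ C :=
  stmt7_general T L hL hTmono hTlip S hSmono hZ β r hβ hrr θ hθ0 hθ σ hσ hσ0 c hc hcsum δ hδ1 vhat w
    hrule hiter
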